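/- For every α ≥ 2, the polynomial r_{α−1} := Σ_{j=0}^{α−1} s^-_j equals y·Σ (−1)^{|c|+α−1}·(3/2)^{Θ(c)}·[c] + z·Σ (−1)^{|c|+α}·(3/2)^{Θ̃(c)}·{c}, where the first sum ranges over compositions c ⊨ α−1 whose last part is odd and the second sum ranges over compositions c ⊨ α whose last part is odd. -/

import Mathlib

/-!
Write `W n`, `O n` and `I n` for the sums of the weight `(−1)^|c| (3/2)^Θ(c) [c]` over the
compositions `c ⊨ n`, over those whose last part is odd, and over those whose last part is `1`.
The compositions of `n + 2` are the `c ++ [1]` and the compositions obtained by increasing the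
last part of some `c ⊨ n + 1`. The weight does not see the size of the last part, and appending
a `1` multiplies it by `−x_{n+2}`, times `3/2` exactly when `c` already ends in `1`. Hence
`I (n+2) = −x_{n+2} (W (n+1) + ½ I (n+1))`, `W (n+2) = I (n+2) + W (n+1)` and
`W (n+1) = O (n+1) + O n`. The first two identities say that `((−1)^n W n, (−1)^n I n)` obeys
the recursion of `(s^-_n, s^+_n)`; the weight `(−1)^|c| (3/2)^Θ̃(c) {c}` satisfies the same
identities with the index shifted by one. This gives `s^-_n = (−1)^n (y W n − z W̃ (n+1))`, and
the third identity makes `Σ_{j ≤ n} s^-_j` telescope to `(−1)^n (y O n − z Õ (n+1))`.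
-/

open MvPolynomial

/-- We work in `ℚ[x_1,x_2,…][y,z]`: polynomials in the two variables `y` (encoded `false`)
and `z` (encoded `true`) over the ring `ℚ[x_1,x_2,…]`.  `sPair j = (s^-_j, s^+_j)` where
`s^-_0 = z`, `s^+_0 = 2y`, and for `j ≥ 1`,
`s^-_j = (x_j − 1)·s^-_{j−1} + (1/2)·x_j·s^+_{j−1}`,
`s^+_j = x_j·s^-_{j−1} + (1/2)·x_j·s^+_{j−1}`. -/
noncomputable def sPair : ℕ →
    MvPolynomial Bool (MvPolynomial ℕ ℚ) × MvPolynomial Bool (MvPolynomial ℕ ℚ)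
  | 0 => (X true, 2 * X false)
  | j + 1 =>
    ((C (X (j + 1) : MvPolynomial ℕ ℚ) - 1) * (sPair j).1 +
        C ((MvPolynomial.C (1 / 2 : ℚ) * X (j + 1) : MvPolynomial ℕ ℚ)) * (sPair j).2,
      C (X (j + 1) : MvPolynomial ℕ ℚ) * (sPair j).1 +
        C ((MvPolynomial.C (1 / 2 : ℚ) * X (j + 1) : MvPolynomial ℕ ℚ)) * (sPair j).2)

/-- `s^-_j`. -/
noncomputable def smP (j : ℕ) : MvPolynomial Bool (MvPolynomial ℕ ℚ) := (sPair j).1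

/-- The monomial `[c] = x_1·x_{1+c_1}·x_{1+c_1+c_2}···x_{1+c_1+⋯+c_{ℓ−1}}` attached to a
composition with list of parts `l` (with the convention `[()] = 0`). -/
noncomputable def brk (l : List ℕ) : MvPolynomial ℕ ℚ :=
  if l.length = 0 then 0
  else ∏ k ∈ Finset.range l.length, X (1 + (l.take k).sum)

/-- The monomial `{c} = x_{c_1}·x_{c_1+c_2}···x_{c_1+⋯+c_{ℓ−1}}` attached to a composition
with list of parts `l` (the empty product `1` when `ℓ = 1`). -/
noncomputable def curly (l : List ℕ) : MvPolynomial ℕ ℚ :=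
  ∏ k ∈ Finset.range (l.length - 1), X ((l.take (k + 1)).sum)

/-- `Θ(c) = #{ j : 1 ≤ j ≤ ℓ−1, c_j = 1 }`. -/
def theta (l : List ℕ) : ℕ :=
  ((l.take (l.length - 1)).filter (· == 1)).length

/-- `Θ̃(c) = #{ i : 2 ≤ i ≤ ℓ−1, c_i = 1 }`. -/
def thetaTilde (l : List ℕ) : ℕ :=
  (((l.drop 1).take (l.length - 2)).filter (· == 1)).length

namespace Composition

variable {n : ℕ}

theorem exists_blocks_eq_append_singleton (c : Composition (n + 1)) :
    ∃ l a, c.blocks = l ++ [a] :=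
  (List.eq_nil_or_concat' c.blocks).resolve_left (by simp)

theorem getLastD_pos (c : Composition (n + 1)) : 0 < c.blocks.getLastD 0 := by
  obtain ⟨l, a, hc⟩ := c.exists_blocks_eq_append_singleton
  simpa [hc] using c.blocks_pos (i := a) (by simp [hc])

def incLast (c : Composition (n + 1)) : Composition (n + 2) where
  blocks := c.blocks.dropLast ++ [c.blocks.getLastD 0 + 1]
  blocks_pos {i} hi := by
    rcases List.mem_append.1 hi with hi | hi
    · exact c.blocks_pos (List.mem_of_mem_dropLast hi)
    · simp_all
  blocks_sum := by
    obtain ⟨l, a, hc⟩ := c.exists_blocks_eq_append_singleton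
    have := c.blocks_sum
    rw [hc] at this ⊢
    simp only [List.dropLast_concat, List.getLastD_concat, List.sum_append,
      List.sum_singleton] at this ⊢
    omega

theorem incLast_blocks_of_eq {c : Composition (n + 1)} {l : List ℕ} {a : ℕ}
    (hc : c.blocks = l ++ [a]) : c.incLast.blocks = l ++ [a + 1] := by
  simp [incLast, hc]

theorem getLastD_incLast (c : Composition (n + 1)) :
    c.incLast.blocks.getLastD 0 = c.blocks.getLastD 0 + 1 := by
  simp [incLast]

theorem incLast_injective : Function.Injective (incLast (n := n)) := by
  intro c d h
  obtain ⟨l, a, hc⟩ := c.exists_blocks_eq_append_singleton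
  obtain ⟨l', a', hd⟩ := d.exists_blocks_eq_append_singleton
  have h := congrArg blocks h
  rw [incLast_blocks_of_eq hc, incLast_blocks_of_eq hd] at h
  obtain ⟨rfl, h⟩ := List.append_inj' h rfl
  exact Composition.ext (by simp_all)

theorem append_single_one_ne_incLast (c d : Composition (n + 1)) :
    c.append (single 1 one_pos) ≠ d.incLast := fun h => by
  have h := congrArg (fun e => e.blocks.getLastD 0) h
  simp only [append_blocks, single_blocks, List.getLastD_concat, getLastD_incLast] at h
  have := d.getLastD_pos
  omega

theorem surjective_sumElim_append_single_one_incLast :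
    Function.Surjective (Sum.elim (fun c : Composition (n + 1) => c.append (single 1 one_pos))
      incLast) := by
  intro c
  obtain ⟨l, a, hc⟩ := c.exists_blocks_eq_append_singleton
  have hsum := c.blocks_sum
  have hpos : ∀ i ∈ l ++ [a], 0 < i := fun i hi => c.blocks_pos (hc ▸ hi)
  have ha : 0 < a := hpos a (by simp)
  simp only [hc, List.sum_append, List.sum_singleton] at hsum
  by_cases ha1 : a = 1
  · refine ⟨.inl ⟨l, fun hi => hpos _ (by simp [hi]), by omega⟩, Composition.ext ?_⟩
    simp [hc, ha1]
  · have hpos' : ∀ i ∈ l ++ [a - 1], 0 < i := by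
      simp only [List.mem_append, List.mem_singleton] at hpos ⊢
      rintro i (hi | rfl) <;> [exact hpos i (.inl hi); omega]
    refine ⟨.inr ⟨l ++ [a - 1], fun hi => hpos' _ hi,
      by simp only [List.sum_append, List.sum_singleton]; omega⟩, Composition.ext ?_⟩
    rw [Sum.elim_inr, incLast_blocks_of_eq rfl, hc, Nat.sub_add_cancel ha]

theorem bijective_sumElim_append_single_one_incLast :
    Function.Bijective (Sum.elim (fun c : Composition (n + 1) => c.append (single 1 one_pos))
      incLast) := by
  refine ⟨?_, surjective_sumElim_append_single_one_incLast⟩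
  rintro (c | c) (d | d) h <;> simp only [Sum.elim_inl, Sum.elim_inr] at h
  · exact congrArg Sum.inl (Composition.ext (by simpa using congrArg blocks h))
  · exact absurd h (append_single_one_ne_incLast c d)
  · exact absurd h.symm (append_single_one_ne_incLast d c)
  · exact congrArg Sum.inr (incLast_injective h)

theorem sum_add_two {M : Type*} [AddCommMonoid M] (f : Composition (n + 2) → M) :
    ∑ c, f c = ∑ c : Composition (n + 1), (f (c.append (single 1 one_pos)) + f c.incLast) := by
  calc ∑ c, f c = ∑ x, f (Sum.elim (fun c : Composition (n + 1) => c.append (single 1 one_pos))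
        incLast x) :=
      (Fintype.sum_bijective _ bijective_sumElim_append_single_one_incLast _ _ fun _ => rfl).symm
    _ = _ := by rw [Fintype.sum_sum_type, Finset.sum_add_distrib]; rfl

theorem eq_single_one (c : Composition 1) : c = single 1 one_pos :=
  (eq_single_iff_length one_pos).2 (le_antisymm c.length_le (c.length_pos_of_pos one_pos))

theorem sum_zero {M : Type*} [AddCommMonoid M] (f : Composition 0 → M) :
    ∑ c, f c = f (ones 0) :=
  have : Subsingleton (Composition 0) := ⟨fun c d =>
    Composition.ext (by rw [c.blocks_eq_nil.2 rfl, d.blocks_eq_nil.2 rfl])⟩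
  Fintype.sum_subsingleton f _

theorem sum_one {M : Type*} [AddCommMonoid M] (f : Composition 1 → M) :
    ∑ c, f c = f (single 1 one_pos) :=
  have : Subsingleton (Composition 1) := ⟨fun c d => c.eq_single_one.trans d.eq_single_one.symm⟩
  Fintype.sum_subsingleton f _

end Composition

section CompositionSums

variable {R : Type*} [CommRing R] (w : List ℕ → R) {n : ℕ}

def compositionSum (n : ℕ) : R := ∑ c : Composition n, w c.blocks

def compositionSumLastOdd (n : ℕ) : R :=
  ∑ c : Composition n, if Odd (c.blocks.getLastD 0) then w c.blocks else 0

def compositionSumLastOne (n : ℕ) : R :=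
  ∑ c : Composition n, if c.blocks.getLastD 0 = 1 then w c.blocks else 0

theorem compositionSumLastOne_add_two :
    compositionSumLastOne w (n + 2) = ∑ c : Composition (n + 1), w (c.blocks ++ [1]) := by
  rw [compositionSumLastOne, Composition.sum_add_two]
  refine Finset.sum_congr rfl fun c _ => ?_
  have : c.incLast.blocks.getLastD 0 ≠ 1 := by
    rw [c.getLastD_incLast]
    have := c.getLastD_pos
    omega
  simp only [Composition.append_blocks, Composition.single_blocks, List.getLastD_concat,
    if_true, if_neg this, add_zero]

theorem compositionSum_add_two
    (hinc : ∀ c : Composition (n + 1), w c.incLast.blocks = w c.blocks) :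
    compositionSum w (n + 2) = compositionSumLastOne w (n + 2) + compositionSum w (n + 1) := by
  rw [compositionSumLastOne_add_two, compositionSum, compositionSum, Composition.sum_add_two,
    ← Finset.sum_add_distrib]
  simp [hinc]

theorem compositionSumLastOne_add_two_of_append_one (x h : R)
    (happ : ∀ c : Composition (n + 1), w (c.blocks ++ [1]) =
      -x * (w c.blocks + h * if c.blocks.getLastD 0 = 1 then w c.blocks else 0)) :
    compositionSumLastOne w (n + 2) =
      -x * (compositionSum w (n + 1) + h * compositionSumLastOne w (n + 1)) := by
  rw [compositionSumLastOne_add_two]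
  simp only [happ, compositionSum, compositionSumLastOne, ← Finset.mul_sum,
    Finset.sum_add_distrib]

theorem compositionSum_succ_eq_lastOdd_add
    (hinc : ∀ m (c : Composition (m + 1)), w c.incLast.blocks = w c.blocks) (n : ℕ) :
    compositionSum w (n + 1) = compositionSumLastOdd w (n + 1) + compositionSumLastOdd w n := by
  cases n with
  | zero =>
    simp [compositionSum, compositionSumLastOdd, Composition.sum_zero, Composition.sum_one]
  | succ n =>
    rw [compositionSum, compositionSumLastOdd, compositionSumLastOdd, Composition.sum_add_two,
      Composition.sum_add_two, ← Finset.sum_add_distrib]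
    refine Finset.sum_congr rfl fun c _ => ?_
    rw [hinc]
    simp only [Composition.getLastD_incLast, Nat.odd_add_one, Composition.append_blocks,
      Composition.single_blocks, List.getLastD_concat]
    split_ifs <;> simp_all

theorem compositionSum_one : compositionSum w 1 = w [1] := by
  simp [compositionSum, Composition.sum_one]

theorem compositionSumLastOne_one : compositionSumLastOne w 1 = w [1] := by
  simp [compositionSumLastOne, Composition.sum_one]

theorem compositionSumLastOne_two : compositionSumLastOne w 2 = w [1, 1] := by
  simp [compositionSumLastOne_add_two, Composition.sum_one]

theorem compositionSumLastOdd_zero : compositionSumLastOdd w 0 = 0 := by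
  simp [compositionSumLastOdd, Composition.sum_zero]

theorem compositionSumLastOdd_one : compositionSumLastOdd w 1 = w [1] := by
  simp [compositionSumLastOdd, Composition.sum_one]

end CompositionSums

section Recurrence

variable {R : Type*} [CommRing R]

theorem eq_neg_one_pow_mul_of_recurrence (x : ℕ → R) (h : R) {u v W I : ℕ → R}
    (hu : ∀ n, u (n + 1) = (x (n + 1) - 1) * u n + h * x (n + 1) * v n)
    (hv : ∀ n, v (n + 1) = x (n + 1) * u n + h * x (n + 1) * v n)
    (hW : ∀ n, W (n + 2) = I (n + 2) + W (n + 1))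
    (hI : ∀ n, I (n + 2) = -x (n + 2) * (W (n + 1) + h * I (n + 1)))
    (hu₁ : u 1 = -W 1) (hv₁ : v 1 = -I 1) (n : ℕ) :
    u (n + 1) = (-1) ^ (n + 1) * W (n + 1) ∧ v (n + 1) = (-1) ^ (n + 1) * I (n + 1) := by
  induction n with
  | zero => simp [hu₁, hv₁]
  | succ n ih =>
    rw [hu (n + 1), hv (n + 1), ih.1, ih.2, hW, hI]
    constructor <;> ring

theorem sum_range_succ_eq_neg_one_pow_mul {u O : ℕ → R} (h₀ : u 0 = O 0)
    (hsucc : ∀ n, u (n + 1) = (-1) ^ (n + 1) * (O (n + 1) + O n)) (k : ℕ) :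
    ∑ j ∈ Finset.range (k + 1), u j = (-1) ^ k * O k := by
  induction k with
  | zero => simp [h₀]
  | succ k ih =>
    rw [Finset.sum_range_succ, ih, hsucc]
    ring

end Recurrence

theorem brk_append_singleton (l : List ℕ) (a : ℕ) :
    brk (l ++ [a]) = ∏ k ∈ Finset.range (l.length + 1), X (1 + (l.take k).sum) := by
  rw [brk, if_neg (by simp), List.length_append, List.length_singleton]
  refine Finset.prod_congr rfl fun k hk => ?_
  rw [List.take_append_of_le_length (by simp at hk; omega)]

theorem brk_append_singleton_append_singleton (l : List ℕ) (a b : ℕ) :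
    brk (l ++ [a] ++ [b]) = brk (l ++ [a]) * X (1 + (l ++ [a]).sum) := by
  rw [brk_append_singleton, List.length_append, List.length_singleton, Finset.prod_range_succ,
    List.take_of_length_le (by simp), brk_append_singleton]
  congr 1
  refine Finset.prod_congr rfl fun k hk => ?_
  rw [List.take_append_of_le_length (by simp at hk; omega)]

theorem curly_append_singleton (l : List ℕ) (a : ℕ) :
    curly (l ++ [a]) = ∏ k ∈ Finset.range l.length, X ((l.take (k + 1)).sum) := by
  rw [curly, List.length_append, List.length_singleton, Nat.add_sub_cancel]
  refine Finset.prod_congr rfl fun k hk => ?_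
  rw [List.take_append_of_le_length (by simp at hk; omega)]

theorem curly_append_singleton_append_singleton (l : List ℕ) (a b : ℕ) :
    curly (l ++ [a] ++ [b]) = curly (l ++ [a]) * X (l ++ [a]).sum := by
  rw [curly_append_singleton, List.length_append, List.length_singleton, Finset.prod_range_succ,
    List.take_of_length_le (by simp), curly_append_singleton]
  congr 1
  refine Finset.prod_congr rfl fun k hk => ?_
  rw [List.take_append_of_le_length (by simp at hk; omega)]

theorem theta_append_singleton (l : List ℕ) (a : ℕ) : theta (l ++ [a]) = l.count 1 := by
  simp [theta, List.count_eq_length_filter]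

theorem thetaTilde_append_singleton (l : List ℕ) (a : ℕ) :
    thetaTilde (l ++ [a]) = l.tail.count 1 := by
  cases l <;> simp [thetaTilde, List.count_eq_length_filter]

theorem C_neg_one_pow_succ_mul_three_halves_pow (P Y : MvPolynomial ℕ ℚ) (m k : ℕ) (b : Prop)
    [Decidable b] :
    C ((-1 : ℚ) ^ (m + 1) * (3 / 2) ^ (k + if b then 1 else 0)) * (P * Y) =
      -Y * (C ((-1 : ℚ) ^ m * (3 / 2) ^ k) * P +
        C (1 / 2) * if b then C ((-1 : ℚ) ^ m * (3 / 2) ^ k) * P else 0) := by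
  have h : (C (3 / 2 : ℚ) : MvPolynomial ℕ ℚ) = 1 + C (1 / 2) := by
    rw [← map_one C, ← map_add]; norm_num
  split_ifs
  · simp only [map_mul, map_pow, map_neg, map_one]
    linear_combination (-1) ^ (m + 1) * C (3 / 2 : ℚ) ^ k * P * Y * h
  · simp only [map_mul, map_pow, map_neg, map_one]
    ring

noncomputable def bracketWeight (l : List ℕ) : MvPolynomial ℕ ℚ :=
  C ((-1 : ℚ) ^ l.length * (3 / 2) ^ theta l) * brk l

noncomputable def curlyWeight (l : List ℕ) : MvPolynomial ℕ ℚ :=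
  C ((-1 : ℚ) ^ l.length * (3 / 2) ^ thetaTilde l) * curly l

theorem bracketWeight_append_singleton_congr (l : List ℕ) (a b : ℕ) :
    bracketWeight (l ++ [a]) = bracketWeight (l ++ [b]) := by
  simp only [bracketWeight, brk_append_singleton, theta_append_singleton, List.length_append,
    List.length_singleton]

theorem curlyWeight_append_singleton_congr (l : List ℕ) (a b : ℕ) :
    curlyWeight (l ++ [a]) = curlyWeight (l ++ [b]) := by
  simp only [curlyWeight, curly_append_singleton, thetaTilde_append_singleton, List.length_append,
    List.length_singleton]

theorem bracketWeight_append_one (l : List ℕ) (a : ℕ) :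
    bracketWeight (l ++ [a] ++ [1]) = -X (1 + (l ++ [a]).sum) *
      (bracketWeight (l ++ [a]) + C (1 / 2) * if a = 1 then bracketWeight (l ++ [a]) else 0) := by
  have hθ : theta (l ++ [a] ++ [1]) = theta (l ++ [a]) + if a = 1 then 1 else 0 := by
    rw [theta_append_singleton, theta_append_singleton, List.count_append, List.count_singleton]
    simp
  rw [bracketWeight, hθ, brk_append_singleton_append_singleton, List.length_append,
    List.length_singleton, C_neg_one_pow_succ_mul_three_halves_pow, bracketWeight]

theorem curlyWeight_append_one (l : List ℕ) (a : ℕ) (hla : l = [] → a ≠ 1) :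
    curlyWeight (l ++ [a] ++ [1]) = -X (l ++ [a]).sum *
      (curlyWeight (l ++ [a]) + C (1 / 2) * if a = 1 then curlyWeight (l ++ [a]) else 0) := by
  have hθ : thetaTilde (l ++ [a] ++ [1]) = thetaTilde (l ++ [a]) + if a = 1 then 1 else 0 := by
    rw [thetaTilde_append_singleton, thetaTilde_append_singleton]
    rcases l with _ | ⟨b, l⟩
    · simp [hla]
    · rw [List.cons_append, List.tail_cons, List.tail_cons, List.count_append,
        List.count_singleton]
      simp
  rw [curlyWeight, hθ, curly_append_singleton_append_singleton, List.length_append,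
    List.length_singleton, C_neg_one_pow_succ_mul_three_halves_pow, curlyWeight]

section Weights
variable {n : ℕ}

theorem bracketWeight_incLast (c : Composition (n + 1)) :
    bracketWeight c.incLast.blocks = bracketWeight c.blocks := by
  obtain ⟨l, a, hc⟩ := c.exists_blocks_eq_append_singleton
  rw [c.incLast_blocks_of_eq hc, hc, bracketWeight_append_singleton_congr]

theorem curlyWeight_incLast (c : Composition (n + 1)) :
    curlyWeight c.incLast.blocks = curlyWeight c.blocks := by
  obtain ⟨l, a, hc⟩ := c.exists_blocks_eq_append_singleton
  rw [c.incLast_blocks_of_eq hc, hc, curlyWeight_append_singleton_congr]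

theorem bracketWeight_blocks_append_one (c : Composition (n + 1)) :
    bracketWeight (c.blocks ++ [1]) = -X (n + 2) * (bracketWeight c.blocks +
      C (1 / 2) * if c.blocks.getLastD 0 = 1 then bracketWeight c.blocks else 0) := by
  obtain ⟨l, a, hc⟩ := c.exists_blocks_eq_append_singleton
  have hsum := c.blocks_sum
  rw [hc] at hsum ⊢
  rw [bracketWeight_append_one, hsum, List.getLastD_concat, add_comm 1]

theorem curlyWeight_blocks_append_one (c : Composition (n + 2)) :
    curlyWeight (c.blocks ++ [1]) = -X (n + 2) * (curlyWeight c.blocks +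
      C (1 / 2) * if c.blocks.getLastD 0 = 1 then curlyWeight c.blocks else 0) := by
  obtain ⟨l, a, hc⟩ := c.exists_blocks_eq_append_singleton
  have hsum := c.blocks_sum
  rw [hc] at hsum ⊢
  rw [curlyWeight_append_one l a (by rintro rfl; simp at hsum; omega), hsum, List.getLastD_concat]

end Weights

theorem bracketWeight_one : bracketWeight [1] = -X 1 := by
  simp [bracketWeight, brk, theta]

theorem curlyWeight_one : curlyWeight [1] = -1 := by
  simp [curlyWeight, curly, thetaTilde]

theorem curlyWeight_one_one : curlyWeight [1, 1] = X 1 := by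
  simp [curlyWeight, curly, thetaTilde]

theorem compositionSum_curlyWeight_two : compositionSum curlyWeight 2 = X 1 - 1 := by
  rw [compositionSum_add_two _ curlyWeight_incLast, compositionSumLastOne_two, compositionSum_one,
    curlyWeight_one_one, curlyWeight_one, sub_eq_add_neg]

theorem C_C_half_mul_two :
    (C (C (1 / 2 : ℚ)) : MvPolynomial Bool (MvPolynomial ℕ ℚ)) * 2 = 1 := by
  rw [← map_ofNat C 2, ← map_ofNat C 2, ← map_mul, ← map_mul]
  norm_num

theorem smP_succ_eq_compositionSum (n : ℕ) :
    smP (n + 1) = (-1) ^ (n + 1) * (C (compositionSum bracketWeight (n + 1)) * X false -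
      C (compositionSum curlyWeight (n + 2)) * X true) := by
  refine (eq_neg_one_pow_mul_of_recurrence (fun j => C (X j)) (C (C (1 / 2 : ℚ))) (u := smP)
    (v := fun j => (sPair j).2)
    (W := fun n => C (compositionSum bracketWeight n) * X false -
      C (compositionSum curlyWeight (n + 1)) * X true)
    (I := fun n => C (compositionSumLastOne bracketWeight n) * X false -
      C (compositionSumLastOne curlyWeight (n + 1)) * X true) ?_ ?_ ?_ ?_ ?_ ?_ n).1
  · intro j
    simp only [smP, sPair, map_mul]
  · intro j
    simp only [smP, sPair, map_mul]
  · intro n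
    rw [compositionSum_add_two _ bracketWeight_incLast,
      compositionSum_add_two _ curlyWeight_incLast, map_add, map_add]
    ring
  · intro n
    rw [compositionSumLastOne_add_two_of_append_one _ _ _ bracketWeight_blocks_append_one,
      compositionSumLastOne_add_two_of_append_one _ _ _ curlyWeight_blocks_append_one]
    simp only [map_add, map_mul, map_neg]
    ring
  · rw [compositionSum_one, bracketWeight_one, compositionSum_curlyWeight_two]
    simp only [smP, sPair, map_mul, map_sub, map_neg, map_one]
    linear_combination (C (X 1) * X false) * C_C_half_mul_two
  · rw [compositionSumLastOne_one, bracketWeight_one, compositionSumLastOne_two,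
      curlyWeight_one_one]
    simp only [sPair, map_mul, map_neg]
    linear_combination (C (X 1) * X false) * C_C_half_mul_two

theorem sum_range_succ_smP (k : ℕ) :
    ∑ j ∈ Finset.range (k + 1), smP j = (-1) ^ k *
      (C (compositionSumLastOdd bracketWeight k) * X false -
        C (compositionSumLastOdd curlyWeight (k + 1)) * X true) := by
  refine sum_range_succ_eq_neg_one_pow_mul (u := smP) (O := fun n =>
    C (compositionSumLastOdd bracketWeight n) * X false -
      C (compositionSumLastOdd curlyWeight (n + 1)) * X true) ?_ (fun n => ?_) k
  · rw [compositionSumLastOdd_zero, compositionSumLastOdd_one, curlyWeight_one]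
    simp only [smP, sPair, map_zero, map_neg, map_one]
    ring
  · rw [smP_succ_eq_compositionSum,
      compositionSum_succ_eq_lastOdd_add _ (fun _ => bracketWeight_incLast),
      compositionSum_succ_eq_lastOdd_add _ (fun _ => curlyWeight_incLast), map_add, map_add]
    ring

theorem sum_ite_odd_C_neg_one_pow_length_add_mul (w : List ℕ → MvPolynomial ℕ ℚ)
    (t : List ℕ → ℕ) (m : List ℕ → MvPolynomial ℕ ℚ)
    (hw : ∀ l, w l = C ((-1 : ℚ) ^ l.length * (3 / 2) ^ t l) * m l) (N k : ℕ) :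
    (∑ c : Composition N, if Odd (c.blocks.getLastD 0) then
        C ((-1 : ℚ) ^ (c.length + k) * (3 / 2) ^ t c.blocks) * m c.blocks else 0) =
      (-1) ^ k * compositionSumLastOdd w N := by
  rw [compositionSumLastOdd, Finset.mul_sum]
  refine Finset.sum_congr rfl fun c _ => ?_
  split_ifs
  · simp only [hw, map_mul, map_pow, map_neg, map_one, pow_add]
    ring
  · rw [mul_zero]

theorem r_poly_expansion_general (α : ℕ) :
    ∑ j ∈ Finset.range α, smP j =
      X false *
        C (∑ c : Composition (α - 1),
            if Odd (c.blocks.getLastD 0) then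
              MvPolynomial.C ((-1 : ℚ) ^ (c.length + α - 1) * (3 / 2 : ℚ) ^ theta c.blocks) *
                brk c.blocks
            else 0) +
      X true *
        C (∑ c : Composition α,
            if Odd (c.blocks.getLastD 0) then
              MvPolynomial.C ((-1 : ℚ) ^ (c.length + α) * (3 / 2 : ℚ) ^ thetaTilde c.blocks) *
                curly c.blocks
            else 0) := by
  rcases α with _ | k
  · simp [Composition.sum_zero]
  rw [Nat.add_sub_cancel]
  simp only [Nat.add_succ_sub_one]
  rw [sum_ite_odd_C_neg_one_pow_length_add_mul bracketWeight theta brk (fun _ => rfl),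
    sum_ite_odd_C_neg_one_pow_length_add_mul curlyWeight thetaTilde curly (fun _ => rfl),
    sum_range_succ_smP]
  simp only [map_mul, map_pow, map_neg, map_one]
  ring

/-- For every `α ≥ 2`, the polynomial `r_{α−1} = Σ_{j=0}^{α−1} s^-_j` equals
`y·Σ_{c ⊨ α−1, last part odd} (−1)^{|c|+α−1}·(3/2)^{Θ(c)}·[c]
 + z·Σ_{c ⊨ α, last part odd} (−1)^{|c|+α}·(3/2)^{Θ̃(c)}·{c}`. -/
theorem r_poly_expansion (α : ℕ) (hα : 2 ≤ α) :
    ∑ j ∈ Finset.range α, smP j =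
      X false *
        C (∑ c : Composition (α - 1),
            if Odd (c.blocks.getLastD 0) then
              MvPolynomial.C ((-1 : ℚ) ^ (c.length + α - 1) * (3 / 2 : ℚ) ^ theta c.blocks) *
                brk c.blocks
            else 0) +
      X true *
        C (∑ c : Composition α,
            if Odd (c.blocks.getLastD 0) then
              MvPolynomial.C ((-1 : ℚ) ^ (c.length + α) * (3 / 2 : ℚ) ^ thetaTilde c.blocks) *
                curly c.blocks
            else 0) :=
  r_poly_expansion_general α
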